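/- arXiv:2205.11312 — 4 statements merged into one kernel-verified Lean document; each statement's English description precedes it below -/
import Mathlib

section
/- Let D be an integral domain with quotient field K that is one-dimensional (Krull dimension 1) and locally finite (every nonzero element of D belongs to only finitely many maximal ideals of D), and let T be a flat overring of D. Then Int(D)T = Int(T). -/
open Polynomial

section Preliminaries

variable {K : Type*} [Field K]


/-- The ring `Int(D)` of integer-valued polynomials on a subring `D` of `K`. -/
def intPoly (D : Subring K) : Subring (Polynomial K) where
  carrier := {f : Polynomial K | ∀ d ∈ D, f.eval d ∈ D}
  mul_mem' := fun {f g} hf hg d hd => by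
    simpa [Polynomial.eval_mul] using mul_mem (hf d hd) (hg d hd)
  one_mem' := fun d hd => by simpa using one_mem D
  add_mem' := fun {f g} hf hg d hd => by
    simpa [Polynomial.eval_add] using add_mem (hf d hd) (hg d hd)
  zero_mem' := fun d hd => by simpa using zero_mem D
  neg_mem' := fun {f} hf d hd => by
    simpa [Polynomial.eval_neg] using neg_mem (hf d hd)

@[simp] lemma mem_intPoly {D : Subring K} {f : Polynomial K} :
    f ∈ intPoly D ↔ ∀ d ∈ D, f.eval d ∈ D := Iff.rfl

lemma smul_poly_eq_C_mul (T : Subring K) (t : ↥T) (p : Polynomial K) :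
    t • p = Polynomial.C (t : K) * p := by
  rw [Subring.smul_def, Polynomial.smul_eq_C_mul]

/-- `Int(D)T` : the `T`-submodule of `K[X]` generated by `Int(D)`, which is a subring. -/
def intMul (D T : Subring K) : Subring (Polynomial K) where
  carrier := (Submodule.span ↥T ((intPoly D : Set (Polynomial K))) : Set (Polynomial K))
  zero_mem' := Submodule.zero_mem _
  add_mem' := fun h1 h2 => Submodule.add_mem _ h1 h2
  neg_mem' := fun h => Submodule.neg_mem _ h
  one_mem' := Submodule.subset_span (one_mem (intPoly D))
  mul_mem' := by
    intro p q hp hq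
    simp only [SetLike.mem_coe] at *
    induction hp using Submodule.span_induction with
    | mem x hx =>
      induction hq using Submodule.span_induction with
      | mem y hy => exact Submodule.subset_span (mul_mem hx hy)
      | zero => simpa using Submodule.zero_mem _
      | add y z _ _ hy hz => rw [mul_add]; exact Submodule.add_mem _ hy hz
      | smul t y _ hy =>
        rw [smul_poly_eq_C_mul, ← mul_assoc, mul_comm x (Polynomial.C (t:K)), mul_assoc,
          ← smul_poly_eq_C_mul]
        exact Submodule.smul_mem _ t hy
    | zero => simpa using Submodule.zero_mem _
    | add y z _ _ hy hz => rw [add_mul]; exact Submodule.add_mem _ hy hz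
    | smul t y _ hy =>
      rw [smul_poly_eq_C_mul, mul_assoc, ← smul_poly_eq_C_mul]
      exact Submodule.smul_mem _ t hy

lemma mem_intMul {D T : Subring K} {f : Polynomial K} :
    f ∈ intMul D T ↔ f ∈ Submodule.span ↥T ((intPoly D : Set (Polynomial K))) := Iff.rfl

lemma intPoly_le_intMul (D T : Subring K) : intPoly D ≤ intMul D T :=
  fun _ hf => Submodule.subset_span hf



/-- The localization `D_M` of `D` at a prime ideal `M`, as a subring of `K` (an overring). -/
def locAt (D : Subring K) (M : Ideal ↥D) [hM : M.IsPrime] : Subring K where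
  carrier := {x : K | ∃ d s : ↥D, s ∉ M ∧ (s : K) * x = (d : K)}
  zero_mem' := ⟨0, 1, (Ideal.ne_top_iff_one M).mp hM.ne_top, by simp⟩
  one_mem' := ⟨1, 1, (Ideal.ne_top_iff_one M).mp hM.ne_top, by simp⟩
  add_mem' := by
    rintro x y ⟨d, s, hs, hsx⟩ ⟨e, t, ht, hty⟩
    refine ⟨d * t + e * s, s * t, fun h => ?_, ?_⟩
    · rcases hM.mem_or_mem h with h | h
      exacts [hs h, ht h]
    · push_cast
      calc (s:K) * (t:K) * (x + y) = (t:K) * ((s:K) * x) + (s:K) * ((t:K) * y) := by ring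
      _ = (d:K) * (t:K) + (e:K) * (s:K) := by rw [hsx, hty]; ring
  neg_mem' := by
    rintro x ⟨d, s, hs, hsx⟩
    exact ⟨-d, s, hs, by push_cast; rw [mul_neg, hsx]⟩
  mul_mem' := by
    rintro x y ⟨d, s, hs, hsx⟩ ⟨e, t, ht, hty⟩
    refine ⟨d * e, s * t, fun h => ?_, ?_⟩
    · rcases hM.mem_or_mem h with h | h
      exacts [hs h, ht h]
    · push_cast
      calc (s:K) * (t:K) * (x * y) = ((s:K)*x) * ((t:K)*y) := by ring
      _ = (d:K) * (e:K) := by rw [hsx, hty]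

lemma le_locAt (D : Subring K) (M : Ideal ↥D) [hM : M.IsPrime] : D ≤ locAt D M := by
  intro x hx
  exact ⟨⟨x, hx⟩, 1, (Ideal.ne_top_iff_one M).mp hM.ne_top, by simp⟩

/-- The conductor ideal `(D :_D f(D))` of an integer-valued-polynomial candidate. -/
def condIdeal (D : Subring K) (f : Polynomial K) : Ideal ↥D where
  carrier := {d : ↥D | ∀ c ∈ D, (d : K) * f.eval c ∈ D}
  zero_mem' := fun c _ => by simpa using zero_mem D
  add_mem' := fun {a b} ha hb c hc => by
    have := add_mem (ha c hc) (hb c hc)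
    simpa [add_mul] using this
  smul_mem' := fun r d hd c hc => by
    have := mul_mem r.2 (hd c hc)
    simpa [mul_assoc] using this

/-- The conductor `(T :_T f(D)T)`. -/
def condIdealT (D T : Subring K) (f : Polynomial K) : Ideal ↥T where
  carrier := {t : ↥T | ∀ c ∈ D, (t : K) * f.eval c ∈ T}
  zero_mem' := fun c _ => by simpa using zero_mem T
  add_mem' := fun {a b} ha hb c hc => by
    have := add_mem (ha c hc) (hb c hc)
    simpa [add_mul] using this
  smul_mem' := fun r t ht c hc => by
    have := mul_mem r.2 (ht c hc)
    simpa [mul_assoc] using this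

end Preliminaries

section CG

variable {A B : Type*} [CommRing A] [IsDomain A] [CommRing B] [IsDomain B]

lemma nonZeroDivisors_le_comap_of_injective (f : A →+* B) (hf : Function.Injective f) :
    nonZeroDivisors A ≤ Submonoid.comap f (nonZeroDivisors B) := by
  intro a ha
  simp only [Submonoid.mem_comap]
  refine mem_nonZeroDivisors_of_ne_zero fun h => ?_
  exact nonZeroDivisors.ne_zero ha (hf (by simpa using h))

/-- Extension of fractional ideals along an injective ring homomorphism of domains,
as a monoid homomorphism. -/
noncomputable def extFrac (f : A →+* B) (hf : Function.Injective f) :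
    FractionalIdeal (nonZeroDivisors A) (FractionRing A) →*
      FractionalIdeal (nonZeroDivisors B) (FractionRing B) where
  toFun I := I.extended (FractionRing B) (nonZeroDivisors_le_comap_of_injective f hf)
  map_one' := FractionalIdeal.extended_one _ _
  map_mul' I J := FractionalIdeal.extended_mul _ _ _ _

lemma extFrac_spanSingleton (f : A →+* B) (hf : Function.Injective f) (x : FractionRing A) :
    extFrac f hf (FractionalIdeal.spanSingleton _ x) =
      FractionalIdeal.spanSingleton _
        (IsLocalization.map (FractionRing B) f
          (nonZeroDivisors_le_comap_of_injective f hf) x) := by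
  set g := IsLocalization.map (S := FractionRing A) (FractionRing B) f
    (nonZeroDivisors_le_comap_of_injective f hf) with hg
  apply FractionalIdeal.coeToSubmodule_injective
  show ((FractionalIdeal.spanSingleton (nonZeroDivisors A) x).extended (FractionRing B)
      (nonZeroDivisors_le_comap_of_injective f hf) : Submodule B (FractionRing B)) =
    ((FractionalIdeal.spanSingleton (nonZeroDivisors B) (g x)) : Submodule B (FractionRing B))
  rw [FractionalIdeal.coe_extended_eq_span, FractionalIdeal.coe_spanSingleton]
  apply le_antisymm
  · rw [Submodule.span_le]
    rintro _ ⟨z, hz, rfl⟩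
    rw [SetLike.mem_coe, FractionalIdeal.mem_spanSingleton] at hz
    obtain ⟨a, rfl⟩ := hz
    rw [SetLike.mem_coe, Submodule.mem_span_singleton]
    refine ⟨f a, ?_⟩
    rw [Algebra.smul_def a x, map_mul, IsLocalization.map_eq, Algebra.smul_def]
  · refine Submodule.span_le.mpr (Set.singleton_subset_iff.mpr (Submodule.subset_span ?_))
    exact ⟨x, SetLike.mem_coe.mpr (FractionalIdeal.mem_spanSingleton_self _ x), rfl⟩

/-- The extension map between class groups induced by an injective ring homomorphism of
integral domains. -/
noncomputable def mapCG (f : A →+* B) (hf : Function.Injective f) :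
    ClassGroup A →* ClassGroup B := by
  refine QuotientGroup.lift _ ((ClassGroup.mk (FractionRing B)).comp (Units.map (extFrac f hf))) ?_
  intro x hx
  obtain ⟨u, rfl⟩ := hx
  rw [MonoidHom.mem_ker, MonoidHom.comp_apply, ClassGroup.mk_eq_one_iff]
  have h1 : ((Units.map (extFrac f hf : _ →* _)
        (toPrincipalIdeal A (FractionRing A) u) :
      (FractionalIdeal (nonZeroDivisors B) (FractionRing B))ˣ) :
      FractionalIdeal (nonZeroDivisors B) (FractionRing B)) =
      extFrac f hf (toPrincipalIdeal A (FractionRing A) u) := rfl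
  rw [h1, coe_toPrincipalIdeal, extFrac_spanSingleton]
  rw [FractionalIdeal.coe_spanSingleton]
  exact ⟨⟨_, rfl⟩⟩

end CG

section Homs

variable {K : Type*} [Field K]

lemma subringInclusion_injective {R : Type*} [Ring R] {A B : Subring R} (h : A ≤ B) :
    Function.Injective (Subring.inclusion h) := by
  intro a b hab
  have h2 := congrArg (Subtype.val : ↥B → R) hab
  exact Subtype.ext h2

/-- The constants map `D → Int(D)`. -/
noncomputable def constHom (D : Subring K) : ↥D →+* ↥(intPoly D) where
  toFun d := ⟨Polynomial.C (d : K), fun c hc => by simpa using d.2⟩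
  map_one' := Subtype.ext (by push_cast; simp)
  map_mul' a b := Subtype.ext (by push_cast; simp)
  map_zero' := Subtype.ext (by push_cast; simp)
  map_add' a b := Subtype.ext (by push_cast; simp)

lemma constHom_injective (D : Subring K) : Function.Injective (constHom D) := by
  intro a b hab
  have h2 := congrArg (Subtype.val : {p : Polynomial K // p ∈ _} → Polynomial K) hab
  exact Subtype.ext (Polynomial.C_injective h2)

lemma C_mem_intMul (D T : Subring K) (t : ↥T) : Polynomial.C (t : K) ∈ intMul D T := by
  have h1 := Submodule.smul_mem (Submodule.span ↥T ((intPoly D : Set (Polynomial K)))) t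
    (Submodule.subset_span (one_mem (intPoly D)))
  rwa [smul_poly_eq_C_mul, mul_one] at h1

/-- The constants map `T → Int(D)T`. -/
noncomputable def constHomMul (D T : Subring K) : ↥T →+* ↥(intMul D T) where
  toFun t := ⟨Polynomial.C (t : K), C_mem_intMul D T t⟩
  map_one' := Subtype.ext (by push_cast; simp)
  map_mul' a b := Subtype.ext (by push_cast; simp)
  map_zero' := Subtype.ext (by push_cast; simp)
  map_add' a b := Subtype.ext (by push_cast; simp)

lemma constHomMul_injective (D T : Subring K) : Function.Injective (constHomMul D T) := by
  intro a b hab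
  have h2 := congrArg (Subtype.val : ↥(intMul D T) → Polynomial K) hab
  exact Subtype.ext (Polynomial.C_injective h2)

/-- The extension map `Pic(D) → Pic(T)` for an overring `T` of `D`. -/
noncomputable def picExt {D T : Subring K} (h : D ≤ T) : ClassGroup ↥D →* ClassGroup ↥T :=
  mapCG (Subring.inclusion h) (subringInclusion_injective h)

/-- The extension map `ι_D : Pic(D) → Pic(Int(D))`. -/
noncomputable def iotaPic (D : Subring K) : ClassGroup ↥D →* ClassGroup ↥(intPoly D) :=
  mapCG (constHom D) (constHom_injective D)

/-- The extension map `ι_{D,T} : Pic(T) → Pic(Int(D)T)`. -/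
noncomputable def iotaPicMul (D T : Subring K) : ClassGroup ↥T →* ClassGroup ↥(intMul D T) :=
  mapCG (constHomMul D T) (constHomMul_injective D T)

/-- The extension map `Pic(Int(D)) → Pic(Int(D)T)`. -/
noncomputable def picIntExt (D T : Subring K) :
    ClassGroup ↥(intPoly D) →* ClassGroup ↥(intMul D T) :=
  mapCG (Subring.inclusion (intPoly_le_intMul D T))
    (subringInclusion_injective (intPoly_le_intMul D T))

/-- Transport of class groups along an equality of subrings. -/
noncomputable def cgCongr {R : Type*} [CommRing R] [IsDomain R] {A B : Subring R} (h : A = B) :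
    ClassGroup ↥A →* ClassGroup ↥B :=
  mapCG (RingEquiv.subringCongr h).toRingHom (RingEquiv.subringCongr h).injective

/-- The int-polynomial Picard group `Picpol(D) = Pic(Int(D))/ι_D(Pic(D))`. -/
noncomputable def picpol (D : Subring K) : Type _ :=
  ClassGroup ↥(intPoly D) ⧸ (iotaPic D).range

noncomputable instance (D : Subring K) : CommGroup (picpol D) :=
  QuotientGroup.Quotient.commGroup _

/-- The quotient map `Pic(Int(D)) → Picpol(D)`. -/
noncomputable def picpolMk (D : Subring K) : ClassGroup ↥(intPoly D) →* picpol D :=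
  QuotientGroup.mk' _

/-- The relative int-polynomial Picard group `Picpol(D,T) = Pic(Int(D)T)/ι_{D,T}(Pic(T))`. -/
noncomputable def picpolRel (D T : Subring K) : Type _ :=
  ClassGroup ↥(intMul D T) ⧸ (iotaPicMul D T).range

noncomputable instance (D T : Subring K) : CommGroup (picpolRel D T) :=
  QuotientGroup.Quotient.commGroup _

/-- The quotient map `Pic(Int(D)T) → Picpol(D,T)`. -/
noncomputable def picpolRelMk (D T : Subring K) :
    ClassGroup ↥(intMul D T) →* picpolRel D T :=
  QuotientGroup.mk' _

/-- `Pic(D,Θ)`: classes of `Pic(D)` that become trivial in every `T ∈ Θ`. -/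
noncomputable def picRel (D : Subring K) (Θ : Set (Subring K)) (hle : ∀ T ∈ Θ, D ≤ T) :
    Subgroup (ClassGroup ↥D) where
  carrier := {c | ∀ T, ∀ hT : T ∈ Θ, picExt (hle T hT) c = 1}
  one_mem' := fun T hT => map_one _
  mul_mem' := fun {a b} ha hb T hT => by rw [map_mul, ha T hT, hb T hT, mul_one]
  inv_mem' := fun {a} ha T hT => by rw [map_inv, ha T hT, inv_one]

/-- The subgroup of a product of groups consisting of finitely supported elements
(the direct sum inside the direct product). -/
def finSupportSubgroup {ι : Type*} (G : ι → Type*) [∀ i, CommGroup (G i)] :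
    Subgroup (Π i, G i) where
  carrier := {x | {i | x i ≠ 1}.Finite}
  one_mem' := by simp
  mul_mem' := fun {a b} ha hb => Set.Finite.subset (ha.union hb) (fun i hi => by
    by_contra h
    simp only [Set.mem_union, Set.mem_setOf_eq, not_or, not_not] at h
    exact hi (by simp [h.1, h.2]))
  inv_mem' := fun {a} ha => Set.Finite.subset ha (fun i hi => by
    simp only [Set.mem_setOf_eq, Pi.inv_apply, ne_eq, inv_eq_one] at hi
    exact hi)

end Homs


/-- `B` is flat as an `A`-module, the module structure being induced by the
inclusion `A ≤ B` of subrings. -/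
def SubringFlat {R : Type*} [CommRing R] (A B : Subring R) (h : A ≤ B) : Prop :=
  @Module.Flat ↥A ↥B _ _ (@Algebra.toModule _ _ _ _ ((Subring.inclusion h).toAlgebra))

section Families

variable {K : Type*} [Field K]

/-- A Jaffard family of the integral domain `D`. -/
structure IsJaffardFamily (D : Subring K) (Θ : Set (Subring K)) : Prop where
  le : ∀ T ∈ Θ, D ≤ T
  top : Θ = {(⊤ : Subring K)} ∨ (⊤ : Subring K) ∉ Θ
  flat : ∀ T, ∀ hT : T ∈ Θ, SubringFlat D T (le T hT)
  complete : ∀ I : Ideal ↥D, ∀ x : ↥D,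
    x ∈ I ↔ ∀ T ∈ Θ, (x : K) ∈ Submodule.span ↥T ((fun d : ↥D => (d : K)) '' (I : Set ↥D))
  independent : ∀ T ∈ Θ, ∀ T' ∈ Θ, T ≠ T' → T ⊔ T' = ⊤
  locallyFinite : ∀ x : K, x ∈ D → x ≠ 0 → {T ∈ Θ | ¬ ∃ y ∈ T, x * y = 1}.Finite

/-- A t-Jaffard family of the integral domain `D`. -/
structure IsTJaffardFamily (D : Subring K) (Θ : Set (Subring K)) : Prop where
  le : ∀ T ∈ Θ, D ≤ T
  top : Θ = {(⊤ : Subring K)} ∨ (⊤ : Subring K) ∉ Θ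
  flat : ∀ T, ∀ hT : T ∈ Θ, SubringFlat D T (le T hT)
  independent : ∀ T ∈ Θ, ∀ T' ∈ Θ, T ≠ T' → T ⊔ T' = ⊤
  locallyFinite : ∀ x : K, x ∈ D → x ≠ 0 → {T ∈ Θ | ¬ ∃ y ∈ T, x * y = 1}.Finite
  inter : ∀ x : K, x ∈ D ↔ ∀ T ∈ Θ, x ∈ T

/-- The Zariski topology on the space of subrings of `K`, whose subbasic open sets are
`B(x) = {T ∣ x ∈ T}`. -/
def zariskiTopOverrings (K : Type*) [Field K] : TopologicalSpace (Subring K) :=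
  TopologicalSpace.generateFrom {U | ∃ x : K, U = {T : Subring K | x ∈ T}}

/-- A pre-Jaffard family of the integral domain `D`. -/
structure IsPreJaffardFamily (D : Subring K) (Θ : Set (Subring K)) : Prop where
  le : ∀ T ∈ Θ, D ≤ T
  top : Θ = {(⊤ : Subring K)} ∨ (⊤ : Subring K) ∉ Θ
  flat : ∀ T, ∀ hT : T ∈ Θ, SubringFlat D T (le T hT)
  complete : ∀ I : Ideal ↥D, ∀ x : ↥D,
    x ∈ I ↔ ∀ T ∈ Θ, (x : K) ∈ Submodule.span ↥T ((fun d : ↥D => (d : K)) '' (I : Set ↥D))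
  independent : ∀ T ∈ Θ, ∀ T' ∈ Θ, T ≠ T' → T ⊔ T' = ⊤
  compact : @IsCompact (Subring K) (zariskiTopOverrings K) Θ

/-- A Jaffard overring: a member of some Jaffard family of `D`. -/
def IsJaffardOverring (D T : Subring K) : Prop :=
  ∃ Θ : Set (Subring K), IsJaffardFamily D Θ ∧ T ∈ Θ

/-- A t-Jaffard overring: a member of some t-Jaffard family of `D`. -/
def IsTJaffardOverring (D T : Subring K) : Prop :=
  ∃ Θ : Set (Subring K), IsTJaffardFamily D Θ ∧ T ∈ Θ

/-- A weak Jaffard family pointed at `Tinf`: a pre-Jaffard family whose set of members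
that are not Jaffard overrings of `D` is exactly `{Tinf}`. -/
def IsWeakJaffardFamily (D : Subring K) (Θ : Set (Subring K)) (Tinf : Subring K) : Prop :=
  IsPreJaffardFamily D Θ ∧ {T ∈ Θ | ¬ IsJaffardOverring D T} = {Tinf}

end Families

/-!
Both inclusions are local-global arguments over the maximal ideals `M` of `D` with `MT ≠ T`.
Flatness gives `T ⊆ D_M` for each of them, since the ideal `(D :_D t)` generates `T` for every
`t ∈ T`; and a nonzero ideal `J` of `D` generates `T` as soon as it lies in no such `M`, because
nonzero primes of `D` are maximal.

For `f ∈ Int(D)` and `t ∈ T` take `J = (D :_D f(t))`: it escapes `M` because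
`Int(D) ⊆ Int(D_M)`. For `f ∈ Int(T)` take `J = (D :_D f(D))`: here `f(D) ⊆ T ⊆ D_M`, and local
finiteness turns this local bound into one global denominator outside `M`.

Both local facts come from one-dimensionality: for `e ≠ 0` the contraction `e D_N ∩ D` has
radical `N`. So `D` is dense in `D_M` modulo `e D_M` (which, applied to a difference
`f(c + e y) - f(c)`, gives `Int(D) ⊆ Int(D_M)`), and `e D_N ∩ D ⊄ M` for the finitely many
`N ≠ M` containing `e`, so one `d ∉ M` has `d / e ∈ D_N` for every `N ≠ M`.
-/

section

variable {R : Type*} [CommRing R] {A : Subring R} {f : R[X]}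

lemma mul_eval_mem {b x : R} (hbf : ∀ i, b * f.coeff i ∈ A) (hx : x ∈ A) :
    b * f.eval x ∈ A := by
  rw [eval_eq_sum_range, Finset.mul_sum]
  exact sum_mem fun i _ => by rw [← mul_assoc]; exact mul_mem (hbf i) (pow_mem hx i)

lemma eval_add_mul_sub_eval_mem {b c y : R} (hb : b ∈ A) (hbf : ∀ i, b * f.coeff i ∈ A)
    (hc : c ∈ A) (hy : y ∈ A) : f.eval (c + b * y) - f.eval c ∈ A := by
  rw [eval_eq_sum_range, eval_eq_sum_range, ← Finset.sum_sub_distrib]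
  refine sum_mem fun i _ => ?_
  obtain ⟨w, hw⟩ := sub_dvd_pow_sub_pow (⟨c + b * y, add_mem hc (mul_mem hb hy)⟩ : A) ⟨c, hc⟩ i
  have hw' : (c + b * y) ^ i - c ^ i = b * y * w := by simpa using congrArg Subtype.val hw
  rw [← mul_sub, hw']
  convert mul_mem (mul_mem (hbf i) hy) w.2 using 1
  ring

end

section

variable {K : Type*} [Field K]

/-- The ideal `(A :_D x)`. -/
def colonIdeal {D A : Subring K} (h : D ≤ A) (x : K) : Ideal D where
  carrier := {d | (d : K) * x ∈ A}
  zero_mem' := by simp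
  add_mem' := fun ha hb => by simpa [add_mul] using add_mem ha hb
  smul_mem' := fun r d hd => by simpa [mul_assoc] using mul_mem (h r.2) hd

@[simp] lemma mem_colonIdeal {D A : Subring K} {h : D ≤ A} {x : K} {d : D} :
    d ∈ colonIdeal h x ↔ (d : K) * x ∈ A := Iff.rfl

lemma colonIdeal_eq_top_iff {D A : Subring K} (h : D ≤ A) (x : K) :
    colonIdeal h x = ⊤ ↔ x ∈ A := by
  simp [Ideal.eq_top_iff_one]

lemma exists_ne_zero_mul_coeff_mem (D : Subring K) [IsFractionRing D K] (f : K[X]) :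
    ∃ b : D, b ≠ 0 ∧ ∀ i, (b : K) * f.coeff i ∈ D := by
  obtain ⟨b, hb, hg⟩ := IsLocalization.integerNormalization_spec (nonZeroDivisors D) f
  refine ⟨b, nonZeroDivisors.ne_zero hb, fun i => ?_⟩
  have := congrArg (coeff · i) hg
  simp only [coeff_map, coeff_smul] at this
  rw [show ((b : D) : K) * f.coeff i = b • f.coeff i from rfl, ← this]
  exact SetLike.coe_mem _

variable {D : Subring K}

lemma mem_locAt_iff_not_colonIdeal_le {M : Ideal D} [M.IsPrime] {x : K} :
    x ∈ locAt D M ↔ ¬ colonIdeal le_rfl x ≤ M := by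
  rw [SetLike.not_le_iff_exists]
  constructor
  · rintro ⟨d, s, hs, hsx⟩
    exact ⟨s, by simp [hsx], hs⟩
  · rintro ⟨s, hsx, hs⟩
    exact ⟨⟨_, hsx⟩, s, hs, rfl⟩

lemma mem_of_forall_mem_locAt {x : K} (h : ∀ (M : Ideal D) [M.IsMaximal], x ∈ locAt D M) :
    x ∈ D := by
  rw [← colonIdeal_eq_top_iff le_rfl]
  by_contra hx
  obtain ⟨M, hM, hle⟩ := Ideal.exists_le_maximal _ hx
  exact mem_locAt_iff_not_colonIdeal_le.mp (h M) hle

/-- `colonIdeal (le_locAt D N) e⁻¹` is the contraction `e D_N ∩ D`. -/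
lemma le_radical_colonIdeal_inv [Ring.KrullDimLE 1 D] (N : Ideal D) [N.IsMaximal] {e : D}
    (he : e ≠ 0) : N ≤ (colonIdeal (le_locAt D N) (e : K)⁻¹).radical := by
  intro u hu
  by_contra hpow
  have heK : (e : K) ≠ 0 := by exact_mod_cast he
  have hdisj : Disjoint ((Ideal.span {e} : Ideal D) : Set D)
      (N.primeCompl ⊔ Submonoid.powers u : Submonoid D) := by
    rw [Set.disjoint_left]
    rintro _ hx hS
    obtain ⟨s, hs, _, ⟨k, rfl⟩, rfl⟩ := Submonoid.mem_sup.mp hS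
    obtain ⟨v, hv⟩ := Ideal.mem_span_singleton'.mp hx
    refine hpow ⟨k, v, s, hs, ?_⟩
    have hv' : (v : K) * e = s * u ^ k := by exact_mod_cast hv
    field_simp
    push_cast
    linear_combination -hv'
  obtain ⟨P, hP, heP, hPS⟩ := (Ideal.span {e}).exists_le_prime_disjoint _ hdisj
  have hPN : P ≤ N := fun x hx => by
    by_contra hxN
    exact Set.disjoint_left.mp hPS hx (Submonoid.mem_sup_left (show x ∈ N.primeCompl from hxN))
  have hP0 : P ≠ ⊥ := fun h => he (by simpa [h] using heP (Ideal.mem_span_singleton_self e))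
  have hPeq : P = N := (hP.isMaximal_of_ne_bot hP0).eq_of_le Ideal.IsPrime.ne_top' hPN
  exact Set.disjoint_left.mp hPS (hPeq ▸ hu) (Submonoid.mem_sup_right (Submonoid.mem_powers u))

lemma eq_of_colonIdeal_inv_le [Ring.KrullDimLE 1 D] {N P : Ideal D} [N.IsMaximal] [P.IsMaximal]
    {e : D} (he : e ≠ 0) (h : colonIdeal (le_locAt D N) (e : K)⁻¹ ≤ P) : N = P :=
  Ideal.IsMaximal.eq_of_le ‹_› Ideal.IsPrime.ne_top' <| (le_radical_colonIdeal_inv N he).trans <|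
    (Ideal.radical_mono h).trans (Ideal.IsPrime.radical inferInstance).le

lemma exists_eq_add_mul_of_mem_locAt [Ring.KrullDimLE 1 D] {M : Ideal D} [M.IsMaximal] {e : D}
    (he : e ≠ 0) {x : K} (hx : x ∈ locAt D M) : ∃ c ∈ D, ∃ y ∈ locAt D M, x = c + e * y := by
  obtain ⟨a, s, hsM, hsx⟩ := hx
  set Q := colonIdeal (le_locAt D M) (e : K)⁻¹
  have hQs : Q ⊔ Ideal.span {s} = ⊤ := by
    by_contra hne
    obtain ⟨N, hN, hle⟩ := Ideal.exists_le_maximal _ hne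
    have hMN : M = N := eq_of_colonIdeal_inv_le he (le_sup_left.trans hle)
    exact hsM (hMN ▸ hle (Ideal.mem_sup_right (Ideal.mem_span_singleton_self s)))
  obtain ⟨q, hq, _, hr, hqr⟩ := Submodule.mem_sup.mp (hQs ▸ Submodule.mem_top : (1 : D) ∈ _)
  obtain ⟨r, rfl⟩ := Ideal.mem_span_singleton'.mp hr
  have he' : (e : K) ≠ 0 := by exact_mod_cast he
  have hqr' : (q : K) + r * s = 1 := by exact_mod_cast hqr
  refine ⟨r * a, mul_mem r.2 a.2, x * ((q : K) * (e : K)⁻¹), ?_, ?_⟩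
  · exact mul_mem ⟨a, s, hsM, hsx⟩ hq
  · field_simp
    linear_combination (-x) * hqr' + r * hsx

lemma eval_mem_locAt_of_mem_intPoly [IsFractionRing D K] [Ring.KrullDimLE 1 D] (M : Ideal D)
    [M.IsMaximal] {f : K[X]} (hf : f ∈ intPoly D) {x : K} (hx : x ∈ locAt D M) :
    f.eval x ∈ locAt D M := by
  obtain ⟨b, hb0, hb⟩ := exists_ne_zero_mul_coeff_mem D f
  obtain ⟨c, hc, y, hy, rfl⟩ := exists_eq_add_mul_of_mem_locAt hb0 hx
  rw [← sub_add_cancel (f.eval _) (f.eval c)]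
  exact add_mem (eval_add_mul_sub_eval_mem (le_locAt D M b.2) (fun i => le_locAt D M (hb i))
    (le_locAt D M hc) hy) (le_locAt D M (hf c hc))

lemma exists_notMem_forall_mul_inv_mem_locAt [Ring.KrullDimLE 1 D]
    (hlf : ∀ x : D, x ≠ 0 → {M : Ideal D | M.IsMaximal ∧ x ∈ M}.Finite)
    (M : Ideal D) [M.IsMaximal] {e : D} (he : e ≠ 0) :
    ∃ d ∉ M, ∀ (N : Ideal D) [N.IsMaximal], N ≠ M → (d : K) * (e : K)⁻¹ ∈ locAt D N := by
  have he' : (e : K) ≠ 0 := by exact_mod_cast he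
  have hloc : ∀ (N : Ideal D) [N.IsMaximal], N ≠ M →
      ∃ d : D, d ∉ M ∧ (d : K) * (e : K)⁻¹ ∈ locAt D N := by
    intro N _ hNM
    obtain ⟨d, hd, hdM⟩ :=
      SetLike.not_le_iff_exists.mp fun hle => hNM (eq_of_colonIdeal_inv_le he hle)
    exact ⟨d, hdM, hd⟩
  let ι := {N : Ideal D // N.IsMaximal ∧ e ∈ N ∧ N ≠ M}
  have : Finite ι := ((hlf e he).subset fun N hN => ⟨hN.1, hN.2.1⟩).to_subtype
  have := Fintype.ofFinite ι
  choose g hgM hgN using fun i : ι => have := i.2.1; hloc i.1 i.2.2.2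
  refine ⟨∏ i, g i, fun h => ?_, fun N _ hNM => ?_⟩
  · obtain ⟨i, -, hi⟩ := (Ideal.IsPrime.prod_mem_iff (p := M)).mp h
    exact hgM i hi
  by_cases heN : e ∈ N
  · let i : ι := ⟨N, ‹_›, heN, hNM⟩
    rw [← Finset.mul_prod_erase _ g (Finset.mem_univ i), Subring.coe_mul, mul_right_comm]
    exact mul_mem (hgN i) (le_locAt D N (SetLike.coe_mem _))
  · exact mul_mem (le_locAt D N (SetLike.coe_mem _))
      (mem_locAt_iff_not_colonIdeal_le.mpr fun hle => heN (hle (by simp [he'])))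

lemma exists_notMem_forall_mul_mem_of_mem_locAt [Ring.KrullDimLE 1 D]
    (hlf : ∀ x : D, x ≠ 0 → {M : Ideal D | M.IsMaximal ∧ x ∈ M}.Finite)
    (M : Ideal D) [M.IsMaximal] {e : D} (he : e ≠ 0) :
    ∃ d ∉ M, ∀ y : K, (e : K) * y ∈ D → y ∈ locAt D M → (d : K) * y ∈ D := by
  obtain ⟨d, hdM, hd⟩ := exists_notMem_forall_mul_inv_mem_locAt hlf M he
  have he' : (e : K) ≠ 0 := by exact_mod_cast he
  refine ⟨d, hdM, fun y hey hy => mem_of_forall_mem_locAt fun N _ => ?_⟩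
  by_cases hNM : N = M
  · subst hNM
    exact mul_mem (le_locAt D N d.2) hy
  · rw [show (d : K) * y = (d : K) * (e : K)⁻¹ * ((e : K) * y) by field_simp]
    exact mul_mem (hd N hNM) (le_locAt D N hey)

lemma map_colonIdeal_eq_top_of_flat [IsFractionRing D K] {T : Subring K} (hDT : D ≤ T)
    (hflat : SubringFlat D T hDT) {t : K} (ht : t ∈ T) :
    Ideal.map (Subring.inclusion hDT) (colonIdeal le_rfl t) = ⊤ := by
  let : Algebra D T := (Subring.inclusion hDT).toAlgebra
  have : Module.Flat D T := hflat
  obtain ⟨⟨a, s⟩, hs⟩ := IsLocalization.surj (nonZeroDivisors D) t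
  have hs : t * s = a := hs
  have hrel : ∑ i, ![(s : D), -a] i • ![(⟨t, ht⟩ : T), 1] i = 0 := by
    ext
    simp only [Fin.sum_univ_two, Matrix.cons_val_zero, Matrix.cons_val_one, Algebra.smul_def,
      mul_one, map_neg, Subring.coe_add, Subring.coe_mul, Subring.coe_neg,
      ZeroMemClass.coe_zero]
    change ((s : D) : K) * t + -(a : K) = 0
    linear_combination hs
  -- Equational criterion for `s • t - a • 1 = 0`: `1 = ∑ A 1 j • y j` with
  -- `s * A 0 j = a * A 1 j`, hence `A 1 j * t = A 0 j ∈ D`.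
  obtain ⟨k, A, y, hxy, hA⟩ := Module.Flat.iff_forall_isTrivialRelation.mp this hrel
  rw [Ideal.eq_top_iff_one, show (1 : T) = _ from hxy 1]
  refine Ideal.sum_mem _ fun j _ => ?_
  rw [Algebra.smul_def]
  refine Ideal.mul_mem_right _ _ (Ideal.mem_map_of_mem _ ?_)
  have hj : (s : K) * A 0 j = a * A 1 j := by
    have := hA j
    simp only [Fin.sum_univ_two, Matrix.cons_val_zero, Matrix.cons_val_one,
      Matrix.cons_val_fin_one, neg_mul, ← sub_eq_add_neg, sub_eq_zero] at this
    exact_mod_cast this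
  have hs0 : ((s : D) : K) ≠ 0 := by exact_mod_cast nonZeroDivisors.coe_ne_zero s
  rw [mem_colonIdeal, mul_left_cancel₀ hs0 (b := (A 1 j : K) * t) (c := A 0 j)
    (by linear_combination (A 1 j : K) * hs - hj)]
  exact SetLike.coe_mem _

lemma le_locAt_of_flat [IsFractionRing D K] {T : Subring K} (hDT : D ≤ T)
    (hflat : SubringFlat D T hDT) (M : Ideal D) [M.IsPrime]
    (hM : Ideal.map (Subring.inclusion hDT) M ≠ ⊤) : T ≤ locAt D M := fun _ ht =>
  mem_locAt_iff_not_colonIdeal_le.mpr fun hle => hM <| eq_top_iff.mpr <|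
    (map_colonIdeal_eq_top_of_flat hDT hflat ht).ge.trans (Ideal.map_mono hle)

lemma map_eq_top_of_forall_not_le [IsFractionRing D K] [Ring.KrullDimLE 1 D] {T : Subring K}
    (hDT : D ≤ T) (hflat : SubringFlat D T hDT) {J : Ideal D} (hJ : J ≠ ⊥)
    (h : ∀ (M : Ideal D) [M.IsMaximal], T ≤ locAt D M → ¬ J ≤ M) :
    Ideal.map (Subring.inclusion hDT) J = ⊤ := by
  by_contra hne
  obtain ⟨N, hN, hJN⟩ := Ideal.exists_le_maximal _ hne
  have hJM : J ≤ N.comap (Subring.inclusion hDT) := Ideal.map_le_iff_le_comap.mp hJN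
  have : (N.comap (Subring.inclusion hDT)).IsMaximal :=
    (Ideal.comap_isPrime _ N).isMaximal_of_ne_bot fun h0 => hJ (le_bot_iff.mp (h0 ▸ hJM))
  exact h _ (le_locAt_of_flat hDT hflat _
    (ne_top_of_le_ne_top hN.ne_top Ideal.map_comap_le)) hJM

lemma mem_of_map_colonIdeal_eq_top {T : Subring K} (hDT : D ≤ T) {x : K}
    (h : Ideal.map (Subring.inclusion hDT) (colonIdeal le_rfl x) = ⊤) : x ∈ T := by
  rw [← colonIdeal_eq_top_iff le_rfl, eq_top_iff, ← h, Ideal.map_le_iff_le_comap]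
  exact fun d hd => hDT hd

lemma mem_intMul_of_map_condIdeal_eq_top {T : Subring K} (hDT : D ≤ T) {f : K[X]}
    (h : Ideal.map (Subring.inclusion hDT) (condIdeal D f) = ⊤) : f ∈ intMul D T := by
  let I : Ideal T :=
    (Submodule.span T (intPoly D : Set K[X])).comap (LinearMap.toSpanSingleton T K[X] f)
  have hI : I = ⊤ := by
    rw [eq_top_iff, ← h, Ideal.map_le_iff_le_comap]
    intro d hd
    show (Subring.inclusion hDT d) • f ∈ Submodule.span T (intPoly D : Set K[X])
    refine Submodule.subset_span fun c hc => ?_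
    rw [smul_poly_eq_C_mul, eval_mul, eval_C]
    exact hd c hc
  rw [mem_intMul]
  simpa [I] using (hI ▸ Submodule.mem_top : (1 : T) ∈ I)

lemma intPoly_le_intPoly_of_flat [IsFractionRing D K] [Ring.KrullDimLE 1 D] {T : Subring K}
    (hDT : D ≤ T) (hflat : SubringFlat D T hDT) : intPoly D ≤ intPoly T := by
  intro f hf t ht
  refine mem_of_map_colonIdeal_eq_top hDT (map_eq_top_of_forall_not_le hDT hflat ?_ fun M _ hTM =>
    mem_locAt_iff_not_colonIdeal_le.mp (eval_mem_locAt_of_mem_intPoly M hf (hTM ht)))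
  obtain ⟨⟨a, s⟩, hs⟩ := IsLocalization.surj (nonZeroDivisors D) (f.eval t)
  refine Submodule.ne_bot_iff _ |>.mpr ⟨s, ?_, nonZeroDivisors.coe_ne_zero s⟩
  rw [mem_colonIdeal, mul_comm]
  exact hs ▸ a.2

lemma intPoly_le_intMul_of_flat [IsFractionRing D K] [Ring.KrullDimLE 1 D]
    (hlf : ∀ x : D, x ≠ 0 → {M : Ideal D | M.IsMaximal ∧ x ∈ M}.Finite) {T : Subring K}
    (hDT : D ≤ T) (hflat : SubringFlat D T hDT) : intPoly T ≤ intMul D T := by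
  intro f hf
  obtain ⟨b, hb0, hb⟩ := exists_ne_zero_mul_coeff_mem D f
  have hbJ : b ∈ condIdeal D f := fun c hc => mul_eval_mem hb hc
  refine mem_intMul_of_map_condIdeal_eq_top hDT (map_eq_top_of_forall_not_le hDT hflat
    (Submodule.ne_bot_iff _ |>.mpr ⟨b, hbJ, hb0⟩) fun M _ hTM hle => ?_)
  obtain ⟨d, hdM, hd⟩ := exists_notMem_forall_mul_mem_of_mem_locAt hlf M hb0
  exact hdM (hle fun c hc => hd _ (hbJ c hc) (hTM (hf c (hDT hc))))

lemma intMul_le_intPoly {D T : Subring K} (h : intPoly D ≤ intPoly T) :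
    intMul D T ≤ intPoly T := by
  intro p hp
  induction hp using Submodule.span_induction with
  | mem q hq => exact h hq
  | zero => exact zero_mem _
  | add q r _ _ hq hr => exact add_mem hq hr
  | smul u q _ hq =>
    rw [smul_poly_eq_C_mul]
    exact mul_mem (fun _ _ => by simp) hq

end

/-- Let `D` be an integral domain with quotient field `K` that is
one-dimensional and locally finite, and let `T` be a flat overring of `D`.
Then `Int(D)T = Int(T)`. -/
theorem statement7 {K : Type*} [Field K] (D : Subring K) [IsFractionRing ↥D K]
    (hdim : ringKrullDim ↥D = 1)
    (hlf : ∀ x : ↥D, x ≠ 0 → {M : Ideal ↥D | M.IsMaximal ∧ x ∈ M}.Finite)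
    (T : Subring K) (hDT : D ≤ T) (hflat : SubringFlat D T hDT) :
    intMul D T = intPoly T := by
  have : Ring.KrullDimLE 1 D := Ring.krullDimLE_iff.mpr hdim.le
  exact le_antisymm (intMul_le_intPoly (intPoly_le_intPoly_of_flat hDT hflat))
    (intPoly_le_intMul_of_flat hlf hDT hflat)
end

section
/- Let D be an integral domain with quotient field K, let T be a flat overring of D, and let Λ be a family of flat overrings of T that is complete over T, i.e., every ideal J of T satisfies J = ⋂_{S∈Λ} JS. If Int(D)S = Int(S) for every S ∈ Λ, then Int(D)T = Int(T). -/
open Polynomial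

/-!
If `S` is a flat overring of `T` and `z = a / b ∈ S`, the equational criterion for flatness,
applied to the relation `b • z - a • 1 = 0` in `S`, shows that the denominator ideal
`(T :_T z)` extends to the unit ideal of `S`. Since the extensions of conductors are closed
under products, the same holds for the conductor `(span_T G :_T f)` of any `f ∈ span_S G`.
Completeness of `Λ` then yields `T = ⋂ S` and `span_T G = ⋂ span_S G`, which give
`Int(D)T ⊆ Int(T)` and, with `G = Int(D)`, `Int(T) ⊆ Int(D)T` once we know that
`Int(T) ⊆ Int(S)` for flat overrings `S`. The latter goes by induction on the degree:
for `t ∈ (T :_T s)` the polynomial `f(tX) - t^(n+1) f(X)` has smaller degree, so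
`t^(n+1) f(s) ∈ S`, and these powers generate the unit ideal of `S`.
-/

theorem Ideal.map_colon_span_singleton_eq_top_of_flat {A B : Type*} [CommRing A] [CommRing B]
    [Algebra A B] [Module.Flat A B] {a b : A} {y : B}
    (hy : algebraMap A B b * y = algebraMap A B a) :
    ((Ideal.span {b}).colon {a}).map (algebraMap A B) = ⊤ := by
  obtain ⟨k, c, w, hw, hc⟩ := Module.Flat.isTrivialRelation_of_sum_smul_eq_zero
    (R := A) (f := ![b, -a]) (x := ![y, 1]) (by simp [Fin.sum_univ_two, Algebra.smul_def, hy])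
  have hcolon : ∀ j, c 1 j ∈ (Ideal.span {b}).colon {a} := fun j => by
    have hj := hc j
    simp only [Fin.sum_univ_two, Matrix.cons_val_zero, Matrix.cons_val_one] at hj
    rw [Submodule.mem_colon_singleton, Ideal.mem_span_singleton', smul_eq_mul]
    exact ⟨c 0 j, by linear_combination hj⟩
  rw [Ideal.eq_top_iff_one, show (1 : B) = ∑ j, c 1 j • w j from hw 1]
  exact Ideal.sum_mem _ fun j _ => by
    rw [Algebra.smul_def]; exact Ideal.mul_mem_right _ _ (Ideal.mem_map_of_mem _ (hcolon j))

theorem Polynomial.natDegree_comp_C_mul_X_sub_C_pow_mul_le {R : Type*} [CommRing R] {p : R[X]}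
    {n : ℕ} (hp : p.natDegree ≤ n + 1) (r : R) :
    (p.comp (C r * X) - C (r ^ (n + 1)) * p).natDegree ≤ n := by
  refine natDegree_le_iff_coeff_eq_zero.mpr fun N hN => ?_
  rw [coeff_sub, comp_C_mul_X_coeff, coeff_C_mul]
  rcases (Nat.succ_le_of_lt hN).eq_or_lt with rfl | hlt
  · rw [Nat.succ_eq_add_one, mul_comm, sub_self]
  · rw [coeff_eq_zero_of_natDegree_lt (hp.trans_lt hlt)]; ring

section Overrings

variable {K : Type*} [Field K]

def denomIdeal (T : Subring K) (z : K) : Ideal T where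
  carrier := {t | (t : K) * z ∈ T}
  add_mem' {a b} ha hb := by simpa [add_mul] using add_mem ha hb
  zero_mem' := by simp
  smul_mem' c t ht := by simpa [mul_assoc] using mul_mem c.2 ht

theorem mem_denomIdeal {T : Subring K} {z : K} {t : T} :
    t ∈ denomIdeal T z ↔ (t : K) * z ∈ T := Iff.rfl

theorem denomIdeal_eq_top_iff {T : Subring K} {z : K} : denomIdeal T z = ⊤ ↔ z ∈ T := by
  rw [Ideal.eq_top_iff_one, mem_denomIdeal, OneMemClass.coe_one, one_mul]

theorem denomIdeal_ne_bot_of_isFractionRing {D T : Subring K} [IsFractionRing D K] (hDT : D ≤ T)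
    (z : K) : denomIdeal T z ≠ ⊥ := by
  obtain ⟨⟨a, b⟩, hab⟩ := IsLocalization.surj (nonZeroDivisors D) z
  rw [Submodule.ne_bot_iff]
  refine ⟨⟨b, hDT b.1.2⟩, ?_, ?_⟩
  · show (b : K) * z ∈ T
    rw [mul_comm]
    exact hab ▸ hDT a.2
  · simp [Subtype.ext_iff, nonZeroDivisors.coe_ne_zero b]

theorem denomIdeal_map_eq_top {T S : Subring K} (h : T ≤ S) (hfl : SubringFlat T S h) {z : K}
    (hz : z ∈ S) (hz₀ : denomIdeal T z ≠ ⊥) : (denomIdeal T z).map (Subring.inclusion h) = ⊤ := by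
  let _ : Algebra T S := (Subring.inclusion h).toAlgebra
  have _ : Module.Flat T S := hfl
  obtain ⟨b, hb, hb₀⟩ := Submodule.exists_mem_ne_zero_of_ne_bot hz₀
  refine eq_top_mono (Ideal.map_mono fun t ht => ?_)
    (Ideal.map_colon_span_singleton_eq_top_of_flat (a := ⟨_, hb⟩) (y := ⟨z, hz⟩) rfl)
  obtain ⟨u, hu⟩ := Ideal.mem_span_singleton'.mp (Submodule.mem_colon_singleton.mp ht)
  have hb₀' : (b : K) ≠ 0 := fun h0 => hb₀ (Subtype.ext h0)
  have htz : (t : K) * z = u := mul_left_cancel₀ hb₀' <| by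
    have := congrArg Subtype.val hu
    simp only [MulMemClass.coe_mul, smul_eq_mul] at this
    linear_combination -this
  exact mem_denomIdeal.mpr (htz ▸ u.2)

theorem one_mem_span_coe_iff_map_eq_top {T S : Subring K} (h : T ≤ S) (J : Ideal T) :
    (1 : K) ∈ Submodule.span S ((fun t : T => (t : K)) '' (J : Set T)) ↔
      J.map (Subring.inclusion h) = ⊤ := by
  have hspan : Submodule.span S ((fun t : T => (t : K)) '' (J : Set T)) =
      Submodule.map (Algebra.linearMap S K) (J.map (Subring.inclusion h)) := by
    rw [Ideal.map, Ideal.span, Submodule.map_span, Set.image_image]; rfl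
  rw [hspan, Ideal.eq_top_iff_one]
  exact ⟨fun ⟨x, hx, hx1⟩ => (Subtype.ext hx1 : x = 1) ▸ hx, fun h1 => ⟨1, h1, rfl⟩⟩

theorem span_subset_span_of_le {V : Type*} [AddCommGroup V] [Module K V] {T S : Subring K}
    (h : T ≤ S) (G : Set V) : (Submodule.span T G : Set V) ⊆ Submodule.span S G := by
  intro f hf
  induction hf using Submodule.span_induction with
  | mem g hg => exact Submodule.subset_span hg
  | zero => exact zero_mem _
  | add x y _ _ hx hy => exact add_mem hx hy
  | smul t x _ hx => exact Submodule.smul_mem _ (⟨t, h t.2⟩ : S) hx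

theorem intMul_mono (D : Subring K) {T S : Subring K} (h : T ≤ S) : intMul D T ≤ intMul D S :=
  span_subset_span_of_le h _

theorem colon_map_eq_top_of_mem_span {V : Type*} [AddCommGroup V] [Module K V]
    {T S : Subring K} (h : T ≤ S) (hfl : SubringFlat T S h) (hK : ∀ z : K, denomIdeal T z ≠ ⊥)
    {G : Set V} {f : V} (hf : f ∈ Submodule.span S G) :
    ((Submodule.span T G).colon {f}).map (Subring.inclusion h) = ⊤ := by
  set N := Submodule.span T G
  have colon_eq_top {x : V} (hx : x ∈ N) : N.colon {x} = ⊤ :=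
    (Submodule.colon_eq_top_iff_subset _).mpr (Set.singleton_subset_iff.mpr hx)
  induction hf using Submodule.span_induction with
  | mem g hg => rw [colon_eq_top (Submodule.subset_span hg), Ideal.map_top]
  | zero => rw [colon_eq_top N.zero_mem, Ideal.map_top]
  | add x y _ _ hx hy =>
    have hle : N.colon {x} * N.colon {y} ≤ N.colon {x + y} :=
      Submodule.mul_le.mpr fun u hu v hv => by
        rw [Submodule.mem_colon_singleton] at hu hv ⊢
        rw [show (u * v) • (x + y) = v • u • x + u • v • y by
          rw [smul_add, smul_smul, smul_smul, mul_comm v]]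
        exact N.add_mem (N.smul_mem v hu) (N.smul_mem u hv)
    refine eq_top_mono (Ideal.map_mono hle) ?_
    rw [Ideal.map_mul, hx, hy, Ideal.top_mul]
  | smul s x _ hx =>
    have hle : denomIdeal T s * N.colon {x} ≤ N.colon {s • x} :=
      Submodule.mul_le.mpr fun u hu v hv => by
        rw [Submodule.mem_colon_singleton] at hv ⊢
        have : (u * v) • s • x = (⟨u * s, hu⟩ : T) • v • x := by
          simp only [Subring.smul_def, smul_smul, MulMemClass.coe_mul, mul_right_comm]
        rw [this]
        exact N.smul_mem _ hv
    refine eq_top_mono (Ideal.map_mono hle) ?_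
    rw [Ideal.map_mul, denomIdeal_map_eq_top h hfl s.2 (hK s), hx, Ideal.top_mul]

theorem C_mem_intPoly {T : Subring K} {t : K} (ht : t ∈ T) : C t ∈ intPoly T :=
  fun _ _ => by rwa [eval_C]

theorem comp_C_mul_X_mem_intPoly {T : Subring K} {f : K[X]} (hf : f ∈ intPoly T) {t : K}
    (ht : t ∈ T) : f.comp (C t * X) ∈ intPoly T :=
  fun d hd => by simpa using hf _ (mul_mem ht hd)

theorem mem_of_map_eq_top_of_forall_pow_mul_mem {T S : Subring K} (h : T ≤ S) {J : Ideal T}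
    (hJ : J.map (Subring.inclusion h) = ⊤) (m : ℕ) {x : K}
    (hx : ∀ t ∈ J, (t : K) ^ m * x ∈ S) : x ∈ S := by
  rw [← denomIdeal_eq_top_iff, eq_top_iff, ← Ideal.span_pow_eq_top _ hJ m, Ideal.span_le]
  rintro _ ⟨_, ⟨t, ht, rfl⟩, rfl⟩
  exact hx t ht

theorem intPoly_le_intPoly_of_flat_s8 {T S : Subring K} (h : T ≤ S) (hfl : SubringFlat T S h)
    (hK : ∀ z : K, denomIdeal T z ≠ ⊥) : intPoly T ≤ intPoly S := by
  suffices ∀ n, ∀ f ∈ intPoly T, f.natDegree ≤ n → f ∈ intPoly S from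
    fun f hf => this _ f hf le_rfl
  intro n
  induction n with
  | zero =>
    intro f hf hdeg s _
    have hc := h (hf 0 (zero_mem T))
    rw [eq_C_of_natDegree_le_zero hdeg, eval_C] at hc ⊢
    exact hc
  | succ n ih =>
    intro f hf hdeg s hs
    refine mem_of_map_eq_top_of_forall_pow_mul_mem h (denomIdeal_map_eq_top h hfl hs (hK s))
      (n + 1) fun t ht => ?_
    set r := f.comp (C (t : K) * X) - C ((t : K) ^ (n + 1)) * f
    have hr : r ∈ intPoly S := ih r
      (sub_mem (comp_C_mul_X_mem_intPoly hf t.2) (mul_mem (C_mem_intPoly (pow_mem t.2 _)) hf))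
      (natDegree_comp_C_mul_X_sub_C_pow_mul_le hdeg _)
    have hrs : r.eval s = f.eval (t * s) - (t : K) ^ (n + 1) * f.eval s := by simp [r]
    have hts : f.eval (t * s) ∈ S := h (hf _ ht)
    simpa [hrs] using sub_mem hts (hr s hs)

theorem mem_of_forall_mem_of_complete {T : Subring K} {Λ : Set (Subring K)}
    (hle : ∀ S ∈ Λ, T ≤ S) (hflat : ∀ S (hS : S ∈ Λ), SubringFlat T S (hle S hS))
    (hK : ∀ z : K, denomIdeal T z ≠ ⊥)
    (hcomp : ∀ J : Ideal T, (∀ S (hS : S ∈ Λ), J.map (Subring.inclusion (hle S hS)) = ⊤) → J = ⊤)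
    {z : K} (hz : ∀ S ∈ Λ, z ∈ S) : z ∈ T :=
  denomIdeal_eq_top_iff.mp <| hcomp _ fun S hS =>
    denomIdeal_map_eq_top (hle S hS) (hflat S hS) (hz S hS) (hK z)

theorem mem_span_of_forall_mem_span_of_complete {V : Type*} [AddCommGroup V] [Module K V]
    {T : Subring K} {Λ : Set (Subring K)}
    (hle : ∀ S ∈ Λ, T ≤ S) (hflat : ∀ S (hS : S ∈ Λ), SubringFlat T S (hle S hS))
    (hK : ∀ z : K, denomIdeal T z ≠ ⊥)
    (hcomp : ∀ J : Ideal T, (∀ S (hS : S ∈ Λ), J.map (Subring.inclusion (hle S hS)) = ⊤) → J = ⊤)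
    {G : Set V} {f : V} (hf : ∀ S ∈ Λ, f ∈ Submodule.span S G) : f ∈ Submodule.span T G := by
  have := hcomp _ fun S hS => colon_map_eq_top_of_mem_span (hle S hS) (hflat S hS) hK (hf S hS)
  exact Set.singleton_subset_iff.mp ((Submodule.colon_eq_top_iff_subset _).mp this)

end Overrings

theorem statement8_general {K : Type*} [Field K] (D : Subring K) [IsFractionRing ↥D K]
    (T : Subring K) (hDT : D ≤ T)
    (Λ : Set (Subring K)) (hle : ∀ S ∈ Λ, T ≤ S)
    (hflatS : ∀ S, ∀ hS : S ∈ Λ, SubringFlat T S (hle S hS))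
    (hcomp : ∀ J : Ideal ↥T, ∀ x : ↥T,
      x ∈ J ↔ ∀ S ∈ Λ, (x : K) ∈ Submodule.span ↥S ((fun t : ↥T => (t : K)) '' (J : Set ↥T)))
    (hloc : ∀ S ∈ Λ, intMul D S = intPoly S) :
    intMul D T = intPoly T := by
  have hK : ∀ z : K, denomIdeal T z ≠ ⊥ := denomIdeal_ne_bot_of_isFractionRing hDT
  have hcomp' (J : Ideal T) (hJ : ∀ S (hS : S ∈ Λ), J.map (Subring.inclusion (hle S hS)) = ⊤) :
      J = ⊤ :=
    (Ideal.eq_top_iff_one J).mpr <| (hcomp J 1).mpr fun S hS =>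
      (one_mem_span_coe_iff_map_eq_top (hle S hS) J).mpr (hJ S hS)
  apply le_antisymm
  · intro f hf d hd
    refine mem_of_forall_mem_of_complete hle hflatS hK hcomp' fun S hS => ?_
    have hfS : f ∈ intPoly S := hloc S hS ▸ intMul_mono D (hle S hS) hf
    exact hfS d (hle S hS hd)
  · intro f hf
    refine mem_span_of_forall_mem_span_of_complete hle hflatS hK hcomp' fun S hS => ?_
    rw [← mem_intMul, hloc S hS]
    exact intPoly_le_intPoly_of_flat_s8 (hle S hS) (hflatS S hS) hK hf

/-- Let `D` be an integral domain with quotient field `K`, let `T` be a flat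
overring of `D`, and let `Λ` be a family of flat overrings of `T` that is complete over `T`.
If `Int(D)S = Int(S)` for every `S ∈ Λ`, then `Int(D)T = Int(T)`. -/
theorem statement8 {K : Type*} [Field K] (D : Subring K) [IsFractionRing ↥D K]
    (T : Subring K) (hDT : D ≤ T) (hflatT : SubringFlat D T hDT)
    (Λ : Set (Subring K)) (hle : ∀ S ∈ Λ, T ≤ S)
    (hflatS : ∀ S, ∀ hS : S ∈ Λ, SubringFlat T S (hle S hS))
    (hcomp : ∀ J : Ideal ↥T, ∀ x : ↥T,
      x ∈ J ↔ ∀ S ∈ Λ, (x : K) ∈ Submodule.span ↥S ((fun t : ↥T => (t : K)) '' (J : Set ↥T)))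
    (hloc : ∀ S ∈ Λ, intMul D S = intPoly S) :
    intMul D T = intPoly T :=
  statement8_general D T hDT Λ hle hflatS hcomp hloc
end

section
/- Let D be an integral domain with quotient field K and let T be a flat overring of D. Then Int(D)T is flat as an Int(D)-module. -/
open Polynomial

/-! Multiplication `f ⊗ t ↦ f · t` maps `Int(D) ⊗_D T` onto `Int(D)T`. It is injective: it factors
as `Int(D) ⊗ T → K[X] ⊗ T → K[X] ⊗ K ≅ K[X]`, where the first map is injective because `T` is
`D`-flat, the second because `K[X]` is `D`-flat (a `K`-vector space, and `K` is a localization of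
`D`), and the last is an isomorphism because `K[X]` is already a `K`-module. So `Int(D)T` is the
base change `Int(D) ⊗_D T` of the flat `D`-module `T`, hence flat over `Int(D)`. -/

open scoped TensorProduct

theorem TensorProduct.injective_of_tmul_eq_smul_of_flat {R A M N L : Type*} [CommRing R]
    (S : Submonoid R) [CommRing A] [Algebra R A] [IsLocalization S A]
    [AddCommGroup M] [Module R M] [AddCommGroup N] [Module R N] [Module.Flat R N]
    [AddCommGroup L] [Module R L] [Module A L] [IsScalarTower R A L] [Module.Flat R L]
    {i : M →ₗ[R] L} (hi : Function.Injective i) {j : N →ₗ[R] A} (hj : Function.Injective j)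
    {Φ : M ⊗[R] N →ₗ[R] L} (hΦ : ∀ m n, Φ (m ⊗ₜ n) = j n • i m) : Function.Injective Φ := by
  have hL : IsBaseChange A (LinearMap.id : L →ₗ[R] L) :=
    haveI := isLocalizedModule_id S L A
    IsLocalizedModule.isBaseChange S A _
  have hfactor : Φ = (hL.equiv.restrictScalars R).toLinearMap ∘ₗ
      (TensorProduct.comm R L A).toLinearMap ∘ₗ j.lTensor L ∘ₗ i.rTensor N := by
    ext m n
    simp [hΦ, hL.equiv_tmul]
  rw [hfactor]
  exact (hL.equiv.restrictScalars R).injective.comp <| (TensorProduct.comm R L A).injective.comp <|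
    (Module.Flat.lTensor_preserves_injective_linearMap j hj).comp
      (Module.Flat.rTensor_preserves_injective_linearMap i hi)

namespace IntMul

variable {K : Type*} [Field K] (D T : Subring K)

/-- The inclusion is carried as a `Fact` so that the `D`-algebra structure it induces on `T`
(the one in `SubringFlat`) is found by instance search. -/
noncomputable abbrev algebraOfLE [h : Fact (D ≤ T)] : Algebra D T :=
  (Subring.inclusion h.out).toAlgebra

noncomputable abbrev intPolyAlgebra : Algebra D (intPoly D) := (constHom D).toAlgebra

noncomputable abbrev intMulAlgebra : Algebra (intPoly D) (intMul D T) :=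
  (Subring.inclusion (intPoly_le_intMul D T)).toAlgebra

attribute [local instance] algebraOfLE intPolyAlgebra intMulAlgebra

variable [Fact (D ≤ T)]

noncomputable def mulMap : intPoly D ⊗[D] T →ₐ[D] K[X] :=
  Algebra.TensorProduct.productMap
    { toRingHom := (intPoly D).subtype, commutes' := fun _ => rfl }
    { toRingHom := Polynomial.C.comp T.subtype, commutes' := fun _ => rfl }

variable {D T}

theorem mulMap_tmul (f : intPoly D) (t : T) :
    mulMap D T (f ⊗ₜ t) = f * Polynomial.C (t : K) := rfl

theorem mulMap_injective [IsFractionRing D K] [Module.Flat D T] :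
    Function.Injective (mulMap D T) := by
  have : Module.Flat D K := IsLocalization.flat K (nonZeroDivisors D)
  have : Module.Flat D K[X] := Module.Flat.trans D K K[X]
  let i : intPoly D →ₐ[D] K[X] := { toRingHom := (intPoly D).subtype, commutes' := fun _ => rfl }
  let j : T →ₐ[D] K := { toRingHom := T.subtype, commutes' := fun _ => rfl }
  exact TensorProduct.injective_of_tmul_eq_smul_of_flat (nonZeroDivisors D) (A := K)
    (i := i.toLinearMap) Subtype.val_injective (j := j.toLinearMap) Subtype.val_injective
    (Φ := (mulMap D T).toLinearMap) fun _ _ =>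
      (mul_comm _ _).trans (Polynomial.smul_eq_C_mul _).symm

theorem mulMap_mem_intMul (z : intPoly D ⊗[D] T) : mulMap D T z ∈ intMul D T := by
  induction z using TensorProduct.induction_on with
  | zero => rw [map_zero]; exact zero_mem _
  | tmul f t => exact mul_mem (intPoly_le_intMul D T f.2) (C_mem_intMul D T t)
  | add x y hx hy => rw [map_add]; exact add_mem hx hy

theorem exists_mulMap_eq_of_mem_intMul {p : K[X]} (hp : p ∈ intMul D T) :
    ∃ z : intPoly D ⊗[D] T, mulMap D T z = p := by
  induction hp using Submodule.span_induction with
  | mem f hf => exact ⟨⟨f, hf⟩ ⊗ₜ 1, by simp [mulMap_tmul]⟩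
  | zero => exact ⟨0, map_zero _⟩
  | add x y _ _ hx hy =>
    obtain ⟨zx, rfl⟩ := hx
    obtain ⟨zy, rfl⟩ := hy
    exact ⟨zx + zy, map_add _ _ _⟩
  | smul t y _ hy =>
    obtain ⟨z, rfl⟩ := hy
    refine ⟨(1 ⊗ₜ t) * z, ?_⟩
    rw [map_mul, mulMap_tmul, smul_poly_eq_C_mul]
    simp

theorem mulMap_smul (f : intPoly D) (z : intPoly D ⊗[D] T) :
    mulMap D T (f • z) = f * mulMap D T z := by
  induction z using TensorProduct.induction_on with
  | zero => simp
  | tmul g t => simp [TensorProduct.smul_tmul', mulMap_tmul, mul_assoc]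
  | add x y hx hy => simp [smul_add, hx, hy, mul_add]

variable (D T) in
noncomputable def tensorEquiv [IsFractionRing D K] [Module.Flat D T] :
    intPoly D ⊗[D] T ≃ₗ[intPoly D] intMul D T :=
  LinearEquiv.ofBijective
    { toFun z := ⟨mulMap D T z, mulMap_mem_intMul z⟩
      map_add' x y := Subtype.ext (map_add _ x y)
      map_smul' f z := Subtype.ext (mulMap_smul f z) }
    ⟨fun _ _ h => mulMap_injective (congrArg Subtype.val h),
      fun ⟨_, hp⟩ => (exists_mulMap_eq_of_mem_intMul hp).imp fun _ h => Subtype.ext h⟩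

theorem flat [IsFractionRing D K] [hT : Module.Flat D T] :
    Module.Flat (intPoly D) (intMul D T) :=
  Module.Flat.of_linearEquiv (tensorEquiv D T).symm

end IntMul

/-- Let `D` be an integral domain with quotient field `K` and let `T` be a flat
overring of `D`. Then `Int(D)T` is flat as an `Int(D)`-module. -/
theorem statement9 {K : Type*} [Field K] (D : Subring K) [IsFractionRing ↥D K]
    (T : Subring K) (hDT : D ≤ T) (hflat : SubringFlat D T hDT) :
    SubringFlat (intPoly D) (intMul D T) (intPoly_le_intMul D T) :=
  have : Fact (D ≤ T) := ⟨hDT⟩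
  IntMul.flat (T := T) (hT := hflat)
end

section
/- Let D be an integral domain with quotient field K, let T be a flat overring of D, and let ℒ be a sublattice of the set of overrings of D (i.e., ℒ is closed under finite intersections and under taking the subring of K generated by two members) such that ⋃_{S∈ℒ} S = T. If the extension map Pic(D) → Pic(S), [I] ↦ [IS], is surjective for every S ∈ ℒ, then the extension map Pic(D) → Pic(T) is surjective. -/
open Polynomial

/-!
An invertible fractional ideal `I` of `T` is witnessed by finitely many elements: `xᵢ ∈ I` and
`yᵢ ∈ I⁻¹` with `∑ xᵢ yᵢ = 1`. Writing the `xᵢ, yᵢ` as fractions of `T` and the products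
`xᵢ yⱼ` as elements of `T` involves only finitely many elements of `T`; as `ℒ` is directed with
union `T`, they all lie in one `S ∈ ℒ`. Over `S` the `xᵢ` and the `yᵢ` generate mutually
inverse fractional ideals `J, J'`, and `JT ≤ I`, `J'T ≤ I⁻¹` force `JT = I`. So `[I]` comes
from `Pic(S)`, hence from `Pic(D)`.
-/

open scoped nonZeroDivisors

lemma Units.eq_of_val_le_of_inv_le {M : Type*} [CommMonoid M] [PartialOrder M]
    [MulLeftMono M] [MulRightMono M] {u v : Mˣ} (h : (u : M) ≤ v) (h' : (↑u⁻¹ : M) ≤ ↑v⁻¹) :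
    u = v := by
  refine Units.ext (le_antisymm h ?_)
  calc (v : M) = v * ↑u⁻¹ * u := by simp [mul_assoc]
    _ ≤ v * ↑v⁻¹ * u := mul_le_mul_left (mul_le_mul_right h' _) _
    _ = u := by simp

namespace FractionalIdeal

lemma exists_sum_mul_eq_one {R P : Type*} [CommRing R] [CommRing P] [Algebra R P]
    {S : Submonoid R} (u : (FractionalIdeal S P)ˣ) :
    ∃ (n : ℕ) (x y : Fin n → P), (∀ i, x i ∈ (u : FractionalIdeal S P)) ∧
      (∀ i, y i ∈ (↑u⁻¹ : FractionalIdeal S P)) ∧ ∑ i, x i * y i = 1 := by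
  have h1 : (1 : P) ∈ ((u : FractionalIdeal S P) : Submodule R P) * (↑u⁻¹ : FractionalIdeal S P) := by
    rw [← coe_mul, u.mul_inv]
    exact one_mem_one S
  rw [Submodule.mul_eq_span_mul_set, Submodule.mem_span_set'] at h1
  obtain ⟨n, c, z, hz⟩ := h1
  choose x hx y hy hxy using fun i => Set.mem_mul.mp (z i).2
  refine ⟨n, fun i => c i • x i, y, fun i => Submodule.smul_mem _ _ (hx i), hy, ?_⟩
  rw [← hz]
  refine Finset.sum_congr rfl fun i _ => ?_
  rw [smul_mul_assoc, hxy]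

lemma spanFinset_mul_spanFinset_eq_one {R K : Type*} [CommRing R] [Field K] [Algebra R K]
    [IsFractionRing R K] {ι : Type*} [Fintype ι] (x y : ι → K) (hxy : ∑ i, x i * y i = 1)
    (h : ∀ i j, x i * y j ∈ (1 : FractionalIdeal R⁰ K)) :
    spanFinset R Finset.univ x * spanFinset R Finset.univ y = 1 := by
  refine le_antisymm ?_ (one_le.mpr ?_)
  · rw [← coe_le_coe, coe_mul, spanFinset_coe, spanFinset_coe, Submodule.span_mul_span,
      Submodule.span_le]
    rintro _ ⟨_, ⟨i, _, rfl⟩, _, ⟨j, _, rfl⟩, rfl⟩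
    exact h i j
  · rw [← hxy]
    exact Submodule.sum_mem _ fun i _ => mul_mem_mul
      (Submodule.subset_span ⟨i, Finset.mem_univ i, rfl⟩)
      (Submodule.subset_span ⟨i, Finset.mem_univ i, rfl⟩)

end FractionalIdeal

section ExtensionOfFractionalIdeals

open FractionalIdeal

variable {A B C : Type*} [CommRing A] [IsDomain A] [CommRing B] [IsDomain B]
  [CommRing C] [IsDomain C]

noncomputable abbrev fracMap (f : A →+* B) (hf : Function.Injective f) :
    FractionRing A →+* FractionRing B :=
  IsLocalization.map (FractionRing B) f (nonZeroDivisors_le_comap_of_injective f hf)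

lemma extFrac_le_iff (f : A →+* B) (hf : Function.Injective f)
    (I : FractionalIdeal A⁰ (FractionRing A))
    (J : FractionalIdeal B⁰ (FractionRing B)) :
    extFrac f hf I ≤ J ↔ ∀ x ∈ I, fracMap f hf x ∈ J := by
  show I.extended (FractionRing B) _ ≤ J ↔ _
  rw [← coe_le_coe, coe_extended_eq_span, Submodule.span_le, Set.image_subset_iff]
  rfl

lemma extFrac_spanFinset_le (f : A →+* B) (hf : Function.Injective f) {ι : Type*}
    (s : Finset ι) (ξ : ι → FractionRing A)
    {J : FractionalIdeal B⁰ (FractionRing B)}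
    (h : ∀ i ∈ s, fracMap f hf (ξ i) ∈ J) : extFrac f hf (spanFinset A s ξ) ≤ J := by
  rw [extFrac_le_iff]
  intro z hz
  change z ∈ Submodule.span A _ at hz
  induction hz using Submodule.span_induction with
  | mem z hz =>
    obtain ⟨i, hi, rfl⟩ := hz
    exact h i hi
  | zero => simpa using J.zero_mem
  | add z w _ _ hz hw => simpa using add_mem (mem_coe.mpr hz) (mem_coe.mpr hw)
  | smul a z _ hz =>
    rw [IsLocalization.map_smul]
    exact Submodule.smul_mem (J : Submodule B (FractionRing B)) (f a) hz

lemma mapCG_mk (f : A →+* B) (hf : Function.Injective f)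
    (u : (FractionalIdeal A⁰ (FractionRing A))ˣ) :
    mapCG f hf (ClassGroup.mk (FractionRing A) u) =
      ClassGroup.mk (FractionRing B) (Units.map (extFrac f hf) u) := by
  rw [← ClassGroup.Quot_mk_eq_mk]
  rfl

lemma mapCG_comp (f : A →+* B) (g : B →+* C) (hf : Function.Injective f)
    (hg : Function.Injective g) :
    mapCG (g.comp f) (hg.comp hf) = (mapCG g hg).comp (mapCG f hf) := by
  ext c
  refine ClassGroup.induction (K := FractionRing A) (fun u => ?_) c
  rw [MonoidHom.comp_apply, mapCG_mk, mapCG_mk, mapCG_mk]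
  congr 1
  ext1
  exact (extended_extended _ _ _ _).symm

lemma div_mem_range_fracMap (f : A →+* B) (hf : Function.Injective f) {p q : B}
    (hp : p ∈ Set.range f) (hq : q ∈ Set.range f) :
    algebraMap B (FractionRing B) p / algebraMap B (FractionRing B) q ∈
      Set.range (fracMap f hf) := by
  obtain ⟨a, rfl⟩ := hp
  obtain ⟨b, rfl⟩ := hq
  exact ⟨algebraMap A _ a / algebraMap A _ b, by
    rw [map_div₀, IsLocalization.map_eq, IsLocalization.map_eq]⟩

lemma exists_units_map_extFrac_eq (f : A →+* B) (hf : Function.Injective f)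
    (u : (FractionalIdeal B⁰ (FractionRing B))ˣ) {ι : Type*} [Fintype ι]
    (x y : ι → FractionRing B) (hx : ∀ i, x i ∈ (u : FractionalIdeal B⁰ (FractionRing B)))
    (hy : ∀ i, y i ∈ (↑u⁻¹ : FractionalIdeal B⁰ (FractionRing B))) (hxy : ∑ i, x i * y i = 1)
    (hx_range : ∀ i, x i ∈ Set.range (fracMap f hf))
    (hy_range : ∀ i, y i ∈ Set.range (fracMap f hf))
    (hxy_range : ∀ i j, x i * y j ∈ Set.range ((algebraMap B (FractionRing B)).comp f)) :
    ∃ v, Units.map (extFrac f hf : _ →* _) v = u := by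
  choose ξ hξ using hx_range
  choose η hη using hy_range
  have hξη : ∑ i, ξ i * η i = 1 :=
    (fracMap f hf).injective (by simpa [map_sum, hξ, hη] using hxy)
  have hξη_one : ∀ i j, ξ i * η j ∈ (1 : FractionalIdeal A⁰ (FractionRing A)) := by
    intro i j
    obtain ⟨a, ha⟩ := hxy_range i j
    refine (mem_one_iff _).mpr ⟨a, (fracMap f hf).injective ?_⟩
    rw [IsLocalization.map_eq, map_mul, hξ, hη, ← ha, RingHom.comp_apply]
  refine ⟨Units.mkOfMulEqOne _ _ (spanFinset_mul_spanFinset_eq_one ξ η hξη hξη_one),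
    Units.eq_of_val_le_of_inv_le ?_ ?_⟩
  · exact extFrac_spanFinset_le f hf _ ξ fun i _ => hξ i ▸ hx i
  · exact extFrac_spanFinset_le f hf _ η fun i _ => hη i ▸ hy i

end ExtensionOfFractionalIdeals

open FractionalIdeal in
theorem ClassGroup.exists_finite_forall_mem_range_mapCG {B : Type*} [CommRing B] [IsDomain B]
    (c : ClassGroup B) :
    ∃ s : Set B, s.Finite ∧ ∀ (A : Type*) [CommRing A] [IsDomain A] (f : A →+* B)
      (hf : Function.Injective f), s ⊆ Set.range f → c ∈ (mapCG f hf).range := by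
  obtain ⟨u, rfl⟩ : ∃ u, ClassGroup.mk (FractionRing B) u = c :=
    ClassGroup.induction (K := FractionRing B) (fun u => ⟨u, rfl⟩) c
  obtain ⟨n, x, y, hx, hy, hxy⟩ := exists_sum_mul_eq_one u
  have hxy_one : ∀ i j, x i * y j ∈ (1 : FractionalIdeal B⁰ (FractionRing B)) :=
    fun i j => u.mul_inv ▸ mul_mem_mul (hx i) (hy j)
  choose b hb using fun i j => (mem_one_iff _).mp (hxy_one i j)
  choose p q _ hpq using fun i => IsFractionRing.div_surjective (A := B) (x i)
  choose p' q' _ hpq' using fun i => IsFractionRing.div_surjective (A := B) (y i)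
  refine ⟨Set.range p ∪ Set.range q ∪ Set.range p' ∪ Set.range q' ∪ Set.range (Function.uncurry b),
    Set.toFinite _, fun A _ _ f hf hs => ?_⟩
  have hxy_range : ∀ i j, x i * y j ∈ Set.range ((algebraMap B (FractionRing B)).comp f) := by
    intro i j
    obtain ⟨a, ha⟩ := hs (Set.mem_union_right _ ⟨(i, j), rfl⟩)
    exact ⟨a, by rw [RingHom.comp_apply, ha, Function.uncurry_apply_pair, hb]⟩
  obtain ⟨v, hv⟩ := exists_units_map_extFrac_eq f hf u x y hx hy hxy
    (fun i => hpq i ▸ div_mem_range_fracMap f hf (hs (by simp)) (hs (by simp)))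
    (fun i => hpq' i ▸ div_mem_range_fracMap f hf (hs (by simp)) (hs (by simp))) hxy_range
  exact ⟨ClassGroup.mk _ v, by rw [mapCG_mk, hv]⟩

lemma picExt_trans {K : Type*} [Field K] {D S T : Subring K} (hDS : D ≤ S) (hST : S ≤ T) :
    picExt (hDS.trans hST) = (picExt hST).comp (picExt hDS) := by
  unfold picExt
  rw [← mapCG_comp]
  rfl

lemma Subring.exists_mem_subset_of_finite {K : Type*} [Field K] {T : Subring K}
    {L : Set (Subring K)} (hsup : ∀ S ∈ L, ∀ S' ∈ L, S ⊔ S' ∈ L)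
    (hunion : (⋃ S ∈ L, (S : Set K)) = (T : Set K)) {s : Set K} (hs : s.Finite)
    (hsT : s ⊆ T) : ∃ S ∈ L, s ⊆ S := by
  have hL : L.Nonempty := by
    have h0 : (0 : K) ∈ ⋃ S ∈ L, (S : Set K) := hunion ▸ T.zero_mem
    obtain ⟨S, hS, -⟩ := Set.mem_iUnion₂.mp h0
    exact ⟨S, hS⟩
  have hdir : DirectedOn (fun S S' : Subring K => (S : Set K) ⊆ S') L :=
    fun S hS S' hS' => ⟨S ⊔ S', hsup S hS S' hS', le_sup_left (a := S), le_sup_right (b := S')⟩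
  obtain ⟨S, hSL, hsS⟩ := hdir.exists_mem_subset_of_finset_subset_biUnion hL
    (s := hs.toFinset) (by rw [hs.coe_toFinset, hunion]; exact hsT)
  exact ⟨S, hSL, hs.coe_toFinset ▸ hsS⟩

theorem statement16_general {K : Type*} [Field K] (D : Subring K)
    (T : Subring K) (hDT : D ≤ T)
    (L : Set (Subring K)) (hLD : ∀ S ∈ L, D ≤ S)
    (hsup : ∀ S ∈ L, ∀ S' ∈ L, S ⊔ S' ∈ L)
    (hunion : (⋃ S ∈ L, (S : Set K)) = (T : Set K))
    (hsurj : ∀ S, ∀ hS : S ∈ L, Function.Surjective (picExt (hLD S hS))) :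
    Function.Surjective (picExt hDT) := by
  intro c
  obtain ⟨s, hs_fin, hs⟩ := ClassGroup.exists_finite_forall_mem_range_mapCG c
  obtain ⟨S, hSL, hsS⟩ := Subring.exists_mem_subset_of_finite hsup hunion
    (hs_fin.image Subtype.val) (Set.image_subset_iff.mpr fun t _ => t.2)
  have hST : S ≤ T := fun x hx => by
    rw [← SetLike.mem_coe, ← hunion]
    exact Set.mem_biUnion hSL hx
  obtain ⟨c', hc'⟩ := hs S (Subring.inclusion hST) (subringInclusion_injective hST)
    fun t ht => ⟨⟨t, hsS ⟨t, ht, rfl⟩⟩, rfl⟩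
  obtain ⟨d, rfl⟩ := hsurj S hSL c'
  exact ⟨d, (DFunLike.congr_fun (picExt_trans (hLD S hSL) hST) d).trans hc'⟩

/-- Let `T` be a flat overring of `D`, and let `ℒ` be a sublattice of the set
of overrings of `D` whose union is `T`. If `Pic(D) → Pic(S)` is surjective for every
`S ∈ ℒ`, then `Pic(D) → Pic(T)` is surjective. -/
theorem statement16 {K : Type*} [Field K] (D : Subring K) [IsFractionRing ↥D K]
    (T : Subring K) (hDT : D ≤ T) (hflat : SubringFlat D T hDT)
    (L : Set (Subring K)) (hLD : ∀ S ∈ L, D ≤ S)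
    (hinf : ∀ S ∈ L, ∀ S' ∈ L, S ⊓ S' ∈ L)
    (hsup : ∀ S ∈ L, ∀ S' ∈ L, S ⊔ S' ∈ L)
    (hunion : (⋃ S ∈ L, (S : Set K)) = (T : Set K))
    (hsurj : ∀ S, ∀ hS : S ∈ L, Function.Surjective (picExt (hLD S hS))) :
    Function.Surjective (picExt hDT) :=
  statement16_general D T hDT L hLD hsup hunion hsurj
end
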